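/- arXiv:1504.06923 — 2 statements merged into one kernel-verified Lean document; each statement's English description precedes it below -/
import Mathlib

section
/- Let N ∈ {2,3} and μ₂ ≥ μ₁ > 0. If either (κ > 1 and β ≥ −(μ₁²μ₂)^{1/3}) or (κ = 1 and β > 0), then system (1) has no opposite sign classical H¹ solution: there is no classical H¹ solution (u,v) of system (1) such that either (u(x) > 0 and v(x) < 0 for all x) or (u(x) < 0 and v(x) > 0 for all x). -/
/-!
Replacing `(u, v)` by `(-u, -v)` if necessary, `u > 0 > v`, and `w = u - v > 0` satisfies
`-Δw = (κ - 1) w + μ₁ u³ + μ₂ |v|³ + β |u v| (u + |v|)`. The cubic part is nonnegative, by a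
weighted AM-GM inequality when `β ≥ -(μ₁² μ₂)^(1/3)` and trivially when `β > 0`.

Both cases are refuted by comparing `w` with an explicit radial barrier `φ` at a maximum point
`x₀` of `φ / w`: there `w - (w x₀ / φ x₀) φ` has a local minimum, so
`(w x₀ / φ x₀) Δφ x₀ ≤ Δw x₀`.
* If `κ > 1`, then `-Δw ≥ (κ - 1) w`; with `φ = (ρ - |x|²)²` on a large ball this forces a
  quadratic with negative discriminant to be `≤ 0`.
* If `κ = 1`, `w` is superharmonic. For `N < 4` the function `|x|^(-N/2) - R^(-N/2)` is
  subharmonic, so on the annuli `1 ≤ |x| ≤ R` it is bounded by `w / m`, where `m` is the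
  minimum of `w` on the unit sphere; letting `R → ∞` gives `w ≥ m |x|^(-N/2)` for `|x| ≥ 1`,
  which is not square integrable.
-/

open MeasureTheory

noncomputable def laplacian {N : ℕ} (u : EuclideanSpace ℝ (Fin N) → ℝ)
    (x : EuclideanSpace ℝ (Fin N)) : ℝ :=
  ∑ i, iteratedFDeriv ℝ 2 u x ![EuclideanSpace.single i 1, EuclideanSpace.single i 1]

open Filter Topology Module Set Metric
open scoped Laplacian RealInnerProductSpace

lemma IsLocalMin.deriv_deriv_nonneg {g : ℝ → ℝ} {a : ℝ} (hmin : IsLocalMin g a)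
    (hg : ContinuousAt g a) : 0 ≤ deriv (deriv g) a := by
  by_contra! hneg
  have hmax : IsLocalMax g a := isLocalMax_of_deriv_deriv_neg hneg hmin.deriv_eq_zero hg
  have hconst : g =ᶠ[𝓝 a] fun _ => g a :=
    (hmin.and hmax).mono fun x hx => le_antisymm hx.2 hx.1
  have hderiv : deriv g =ᶠ[𝓝 a] fun _ => 0 :=
    hconst.eventuallyEq_nhds.mono fun x hx => by rw [hx.deriv_eq, deriv_const]
  rw [hderiv.deriv_eq, deriv_const] at hneg
  exact hneg.false

lemma deriv_deriv_comp {φ g : ℝ → ℝ} {t : ℝ} (hφ : ContDiffAt ℝ 2 φ (g t))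
    (hg : ContDiffAt ℝ 2 g t) :
    deriv (deriv (φ ∘ g)) t
      = deriv (deriv φ) (g t) * deriv g t ^ 2 + deriv φ (g t) * deriv (deriv g) t := by
  have hchain : deriv (φ ∘ g) =ᶠ[𝓝 t] fun s => deriv φ (g s) * deriv g s := by
    filter_upwards [hg.eventually (by simp), hg.continuousAt.eventually (hφ.eventually (by simp))]
      with s hgs hφs
    exact deriv_comp s (hφs.differentiableAt two_ne_zero) (hgs.differentiableAt two_ne_zero)
  have hφ' : DifferentiableAt ℝ (deriv φ) (g t) :=
    (hφ.derivWithin (m := 1) le_rfl).differentiableAt one_ne_zero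
  have hg' : DifferentiableAt ℝ (deriv g) t :=
    (hg.derivWithin (m := 1) le_rfl).differentiableAt one_ne_zero
  have hgd : DifferentiableAt ℝ g t := hg.differentiableAt two_ne_zero
  have hprod : HasDerivAt (fun s => deriv φ (g s) * deriv g s)
      (deriv (deriv φ) (g t) * deriv g t * deriv g t + deriv φ (g t) * deriv (deriv g) t) t :=
    (hφ'.hasDerivAt.comp t hgd.hasDerivAt).mul hg'.hasDerivAt
  rw [hchain.deriv_eq, hprod.deriv]
  ring

lemma IsCompact.exists_isMaxOn_div_pos {X : Type*} [TopologicalSpace X] {K : Set X}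
    (hK : IsCompact K) {φ w : X → ℝ} (hφ : ContinuousOn φ K) (hw : ContinuousOn w K)
    (hwpos : ∀ x ∈ K, 0 < w x) {z : X} (hz : z ∈ K) (hφz : 0 < φ z) :
    ∃ x₀ ∈ K, 0 < φ x₀ ∧ IsMaxOn (fun x => φ x / w x) K x₀ := by
  obtain ⟨x₀, hx₀, hmax⟩ := hK.exists_isMaxOn ⟨z, hz⟩ (hφ.div hw fun x hx => (hwpos x hx).ne')
  have : 0 < φ x₀ / w x₀ := (div_pos hφz (hwpos z hz)).trans_le (hmax hz)
  exact ⟨x₀, hx₀, (div_pos_iff_of_pos_right (hwpos x₀ hx₀)).mp this, hmax⟩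

lemma isCompact_annulus {E : Type*} [NormedAddCommGroup E] [ProperSpace E] (r R : ℝ) :
    IsCompact {y : E | r ≤ ‖y‖ ∧ ‖y‖ ≤ R} :=
  (isCompact_closedBall (0 : E) R).of_isClosed_subset
    ((isClosed_le continuous_const continuous_norm).inter
      (isClosed_le continuous_norm continuous_const))
    fun _ hy => mem_closedBall_zero_iff.2 hy.2

lemma annulus_mem_nhds {E : Type*} [NormedAddCommGroup E] {r R : ℝ} {x : E} (hr : r < ‖x‖)
    (hR : ‖x‖ < R) : {y : E | r ≤ ‖y‖ ∧ ‖y‖ ≤ R} ∈ 𝓝 x :=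
  mem_of_superset (((isOpen_lt continuous_const continuous_norm).inter
    (isOpen_lt continuous_norm continuous_const)).mem_nhds ⟨hr, hR⟩) fun _ hy => ⟨hy.1.le, hy.2.le⟩

section NormedSpace

variable {E F : Type*} [NormedAddCommGroup E] [NormedSpace ℝ E]
  [NormedAddCommGroup F] [NormedSpace ℝ F]

lemma iteratedFDeriv_two_apply_self {f : E → F} {x : E} (hf : ContDiffAt ℝ 2 f x) (v : E) :
    iteratedFDeriv ℝ 2 f x ![v, v] = deriv (deriv fun t : ℝ => f (x + t • v)) 0 := by
  have hline : Tendsto (fun t : ℝ => x + t • v) (𝓝 0) (𝓝 x) := by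
    have : Continuous (fun t : ℝ => x + t • v) := by fun_prop
    simpa using this.tendsto 0
  have hfirst : deriv (fun t : ℝ => f (x + t • v))
      =ᶠ[𝓝 0] fun t => iteratedFDeriv ℝ 1 f (x + t • v) (fun _ => v) := by
    filter_upwards [hline.eventually (hf.eventually (by simp))] with t ht
    simpa using ContDiffAt.deriv_fderiv_add_smul (n := 0) (ht.of_le (by norm_num))
  have hsecond := ContDiffAt.deriv_fderiv_add_smul (n := 1) (t := (0 : ℝ)) (y := v)
    (by simpa [one_add_one_eq_two] using hf)
  rw [hfirst.deriv_eq, hsecond, zero_smul, add_zero]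
  congr 1
  ext i
  fin_cases i <;> rfl

end NormedSpace

section InnerProductSpace

variable {E : Type*} [NormedAddCommGroup E] [InnerProductSpace ℝ E]

lemma deriv_deriv_norm_add_smul_sq {x v : E} (hv : ‖v‖ = 1) {φ : ℝ → ℝ}
    (hφ : ContDiffAt ℝ 2 φ (‖x‖ ^ 2)) :
    deriv (deriv fun t : ℝ => φ (‖x + t • v‖ ^ 2)) 0
      = 4 * deriv (deriv φ) (‖x‖ ^ 2) * ⟪x, v⟫ ^ 2 + 2 * deriv φ (‖x‖ ^ 2) := by
  set q : ℝ → ℝ := fun t => ‖x‖ ^ 2 + 2 * ⟪x, v⟫ * t + t ^ 2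
  have hq : (fun t : ℝ => ‖x + t • v‖ ^ 2) = q := by
    funext t
    rw [norm_add_sq_real, inner_smul_right, norm_smul, hv, Real.norm_eq_abs, mul_one, sq_abs]
    ring
  have hq' : ∀ t, HasDerivAt q (2 * ⟪x, v⟫ + 2 * t) t := fun t => by
    simpa using (((hasDerivAt_id' t).const_mul (2 * ⟪x, v⟫)).const_add (‖x‖ ^ 2)).fun_add
      ((hasDerivAt_id' t).fun_pow 2)
  have hdq : deriv q = fun t => 2 * ⟪x, v⟫ + 2 * t := funext fun t => (hq' t).deriv
  have hddq : deriv (deriv q) 0 = 2 := by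
    rw [hdq]
    simp
  have hq0 : q 0 = ‖x‖ ^ 2 := by simp [q]
  change deriv (deriv (φ ∘ fun t : ℝ => ‖x + t • v‖ ^ 2)) 0 = _
  rw [hq, deriv_deriv_comp (by rwa [hq0]) (by fun_prop), hddq, hdq, hq0]
  ring

variable [FiniteDimensional ℝ E]

lemma IsLocalMin.laplacian_nonneg {f : E → ℝ} {x : E} (hmin : IsLocalMin f x)
    (hf : ContDiffAt ℝ 2 f x) : 0 ≤ Δ f x := by
  rw [InnerProductSpace.laplacian_eq_iteratedFDeriv_stdOrthonormalBasis]
  refine Finset.sum_nonneg fun i _ => ?_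
  set v := stdOrthonormalBasis ℝ E i
  have hline : ContinuousAt (fun t : ℝ => x + t • v) 0 := by fun_prop
  have hx : x + (0 : ℝ) • v = x := by simp
  rw [iteratedFDeriv_two_apply_self hf]
  refine IsLocalMin.deriv_deriv_nonneg ?_ ?_
  · exact IsLocalMin.comp_continuous (by rwa [hx]) hline
  · exact ContinuousAt.comp (g := f) (by rw [hx]; exact hf.continuousAt) hline

lemma laplacian_comp_norm_sq {φ : ℝ → ℝ} {x : E} (hφ : ContDiffAt ℝ 2 φ (‖x‖ ^ 2)) :
    Δ (fun y : E => φ (‖y‖ ^ 2)) x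
      = 4 * ‖x‖ ^ 2 * deriv (deriv φ) (‖x‖ ^ 2) + 2 * finrank ℝ E * deriv φ (‖x‖ ^ 2) := by
  set b := stdOrthonormalBasis ℝ E
  have hf : ContDiffAt ℝ 2 (fun y => φ (‖y‖ ^ 2)) x :=
    hφ.comp x (contDiff_norm_sq ℝ).contDiffAt
  rw [InnerProductSpace.laplacian_eq_iteratedFDeriv_orthonormalBasis _ b]
  simp only [iteratedFDeriv_two_apply_self hf,
    deriv_deriv_norm_add_smul_sq (b.norm_eq_one _) hφ, Finset.sum_add_distrib,
    ← Finset.mul_sum, b.sum_sq_inner_left, Finset.sum_const, Finset.card_univ,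
    Fintype.card_fin, nsmul_eq_mul]
  ring

lemma laplacian_sq_sub_norm_sq (ρ : ℝ) (x : E) :
    Δ (fun y : E => (ρ - ‖y‖ ^ 2) ^ 2) x = 8 * ‖x‖ ^ 2 - 4 * finrank ℝ E * (ρ - ‖x‖ ^ 2) := by
  have hd : deriv (fun s : ℝ => (ρ - s) ^ 2) = fun s => -2 * (ρ - s) := funext fun s => by
    rw [(((hasDerivAt_id' s).const_sub ρ).fun_pow 2).deriv]
    ring
  rw [laplacian_comp_norm_sq (φ := fun s => (ρ - s) ^ 2) (by fun_prop), hd]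
  simp only [neg_mul, deriv.fun_neg', deriv_const_mul_field', deriv_const_sub_id', mul_neg,
    mul_one, neg_neg]
  ring

lemma laplacian_rpow_neg_norm_sq_sub {x : E} (hx : x ≠ 0) (α c : ℝ) :
    Δ (fun y : E => (‖y‖ ^ 2) ^ (-α) - c) x
      = 2 * α * (2 * α + 2 - finrank ℝ E) * (‖x‖ ^ 2) ^ (-α - 1) := by
  have hx2 : ‖x‖ ^ 2 ≠ 0 := by positivity
  have hd : deriv (fun s : ℝ => s ^ (-α) - c) = fun s => -α * s ^ (-α - 1) := by
    funext s; simp [Real.deriv_rpow_const]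
  rw [laplacian_comp_norm_sq (φ := fun s => s ^ (-α) - c)
    ((Real.contDiffAt_rpow_const_of_ne hx2).sub contDiffAt_const), hd]
  simp only [deriv_const_mul_field', Real.deriv_rpow_const]
  rw [show -α - 1 - 1 = (-α - 1) - 1 by ring, Real.rpow_sub_one hx2]
  field_simp
  ring

lemma laplacian_le_of_isLocalMax_div {w φ : E → ℝ} {x₀ : E} (hw : ContDiffAt ℝ 2 w x₀)
    (hφ : ContDiffAt ℝ 2 φ x₀) (hwpos : ∀ᶠ x in 𝓝 x₀, 0 < w x) (hφpos : 0 < φ x₀)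
    (hmax : IsLocalMax (fun x => φ x / w x) x₀) :
    w x₀ / φ x₀ * Δ φ x₀ ≤ Δ w x₀ := by
  set t := w x₀ / φ x₀
  have hw₀ : 0 < w x₀ := hwpos.self_of_nhds
  have hmin : IsLocalMin (w - t • φ) x₀ := by
    filter_upwards [hmax, hwpos] with x hx hwx
    rw [div_le_div_iff₀ hwx hw₀] at hx
    have ht : t * φ x ≤ w x := by
      rw [div_mul_eq_mul_div, div_le_iff₀ hφpos]
      linarith
    simp only [Pi.sub_apply, Pi.smul_apply, smul_eq_mul, t, div_mul_cancel₀ _ hφpos.ne']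
    linarith
  have htφ : ContDiffAt ℝ 2 (t • φ) x₀ := hφ.const_smul t
  have := hmin.laplacian_nonneg (hw.sub htφ)
  rwa [hw.laplacian_sub htφ, InnerProductSpace.laplacian_smul t hφ, smul_eq_mul,
    sub_nonneg] at this

lemma not_isLocalMax_div_of_laplacian {w φ : E → ℝ} {x₀ : E} (hw : ContDiffAt ℝ 2 w x₀)
    (hφ : ContDiffAt ℝ 2 φ x₀) (hwpos : ∀ᶠ x in 𝓝 x₀, 0 < w x) (hφpos : 0 < φ x₀)
    (hΔw : Δ w x₀ ≤ 0) (hΔφ : 0 < Δ φ x₀) :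
    ¬ IsLocalMax (fun x => φ x / w x) x₀ := fun hmax => by
  have := laplacian_le_of_isLocalMax_div hw hφ hwpos hφpos hmax
  have := mul_pos (div_pos hwpos.self_of_nhds hφpos) hΔφ
  linarith

theorem exists_neg_laplacian_lt_mul {c : ℝ} (hc : 0 < c) {w : E → ℝ} (hw : ContDiff ℝ 2 w)
    (hwpos : ∀ x, 0 < w x) : ∃ x, -Δ w x < c * w x := by
  by_contra! hsup
  set n : ℝ := (finrank ℝ E : ℝ)
  -- `ρ` makes the discriminant of `s ↦ c s² - (4n + 8) s + 8ρ` equal to `-1`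
  set ρ : ℝ := ((4 * n + 8) ^ 2 + 1) / (32 * c)
  have hρ : 32 * c * ρ = (4 * n + 8) ^ 2 + 1 := by simp only [ρ]; field_simp
  have hρpos : 0 < ρ := by positivity
  set φ : E → ℝ := fun y => (ρ - ‖y‖ ^ 2) ^ 2
  have hφ : ContDiff ℝ 2 φ := (contDiff_const.sub (contDiff_norm_sq ℝ)).pow 2
  obtain ⟨x₀, hx₀K, hφx₀, hmax⟩ := (isCompact_closedBall (0 : E) √ρ).exists_isMaxOn_div_pos
    hφ.continuous.continuousOn hw.continuous.continuousOn (fun x _ => hwpos x)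
    (mem_closedBall_self (Real.sqrt_nonneg ρ)) (by simpa [φ] using pow_pos hρpos 2)
  have hx₀ : ‖x₀‖ < √ρ := by
    refine (mem_closedBall_zero_iff.mp hx₀K).lt_of_ne fun h => ?_
    simp [φ, h, Real.sq_sqrt hρpos.le] at hφx₀
  have hK : closedBall (0 : E) √ρ ∈ 𝓝 x₀ :=
    mem_of_superset (Metric.isOpen_ball.mem_nhds (mem_ball_zero_iff.2 hx₀)) ball_subset_closedBall
  have htouch := laplacian_le_of_isLocalMax_div hw.contDiffAt hφ.contDiffAt
    (Eventually.of_forall hwpos) hφx₀ (hmax.isLocalMax hK)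
  have ht : 0 < w x₀ / φ x₀ := div_pos (hwpos x₀) hφx₀
  have hΔφ : Δ φ x₀ ≤ -c * φ x₀ := by
    refine le_of_mul_le_mul_left (htouch.trans ?_) ht
    rw [show w x₀ / φ x₀ * (-c * φ x₀) = -c * w x₀ by field_simp]
    linarith [hsup x₀]
  rw [laplacian_sq_sub_norm_sq] at hΔφ
  nlinarith [sq_nonneg (2 * c * (ρ - ‖x₀‖ ^ 2) - (4 * n + 8)), hρ]

lemma mul_rpow_sub_le_of_laplacian_nonpos [Nontrivial E] {w : E → ℝ} (hw : ContDiff ℝ 2 w)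
    (hwpos : ∀ x, 0 < w x) (hΔ : ∀ x, Δ w x ≤ 0) {α : ℝ} (hα : 0 < α)
    (hαn : (finrank ℝ E : ℝ) < 2 * α + 2) {m : ℝ} (hm : ∀ y : E, ‖y‖ = 1 → m ≤ w y)
    {R : ℝ} (hR : 1 < R) {x : E} (hx1 : 1 ≤ ‖x‖) (hxR : ‖x‖ ≤ R) :
    m * ((‖x‖ ^ 2) ^ (-α) - (R ^ 2) ^ (-α)) ≤ w x := by
  set ψ : E → ℝ := fun y => (‖y‖ ^ 2) ^ (-α) - (R ^ 2) ^ (-α)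
  set A : Set E := {y | 1 ≤ ‖y‖ ∧ ‖y‖ ≤ R}
  have hψA : ∀ y ∈ A, 0 ≤ ψ y := fun y hy => sub_nonneg.2 <|
    Real.rpow_le_rpow_of_nonpos (by nlinarith [hy.1]) (by nlinarith [hy.1, hy.2]) (by linarith)
  have hψ : ContinuousOn ψ A := fun y hy =>
    (((continuous_norm.pow 2).continuousAt.rpow_const
      (Or.inl (by simp only [Pi.pow_apply]; nlinarith [hy.1]))).sub
      continuousAt_const).continuousWithinAt
  obtain ⟨z, hz⟩ := exists_norm_eq E zero_le_one
  have hψz : 0 < ψ z := by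
    simpa [ψ, hz] using Real.rpow_lt_one_of_one_lt_of_neg (by nlinarith : 1 < R ^ 2)
      (neg_lt_zero.2 hα)
  obtain ⟨x₀, hx₀A, hψx₀, hmax⟩ := (isCompact_annulus 1 R).exists_isMaxOn_div_pos hψ
    hw.continuous.continuousOn (fun y _ => hwpos y) ⟨hz.ge, hz.le.trans hR.le⟩ hψz
  -- `ψ` is strictly subharmonic, so the ratio `ψ / w` has no interior maximum
  have hx₀ : ‖x₀‖ = 1 := by
    by_contra hne
    have h1 : 1 < ‖x₀‖ := lt_of_le_of_ne hx₀A.1 (Ne.symm hne)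
    have h2 : ‖x₀‖ < R := hx₀A.2.lt_of_ne fun h => by simp [ψ, h] at hψx₀
    have hx₀0 : x₀ ≠ 0 := norm_pos_iff.1 (one_pos.trans h1)
    have hψx₀' : ContDiffAt ℝ 2 ψ x₀ :=
      ((Real.contDiffAt_rpow_const_of_ne (by positivity)).comp x₀
        (contDiff_norm_sq ℝ).contDiffAt).sub contDiffAt_const
    refine not_isLocalMax_div_of_laplacian hw.contDiffAt hψx₀' (Eventually.of_forall hwpos) hψx₀
      (hΔ x₀) ?_ (hmax.isLocalMax (annulus_mem_nhds h1 h2))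
    have : 0 < 2 * α + 2 - finrank ℝ E := by linarith
    rw [laplacian_rpow_neg_norm_sq_sub hx₀0]
    positivity
  have hψx₀1 : ψ x₀ ≤ 1 := by
    simpa [ψ, hx₀] using Real.rpow_nonneg (sq_nonneg R) (-α)
  have hratio : ψ x * w x₀ ≤ ψ x₀ * w x :=
    (div_le_div_iff₀ (hwpos x) (hwpos x₀)).1 (hmax ⟨hx1, hxR⟩)
  calc m * ψ x ≤ w x₀ * ψ x := mul_le_mul_of_nonneg_right (hm x₀ hx₀) (hψA x ⟨hx1, hxR⟩)
    _ ≤ ψ x₀ * w x := by linarith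
    _ ≤ w x := mul_le_of_le_one_left (hwpos x).le hψx₀1

lemma mul_rpow_le_of_laplacian_nonpos [Nontrivial E] {w : E → ℝ} (hw : ContDiff ℝ 2 w)
    (hwpos : ∀ x, 0 < w x) (hΔ : ∀ x, Δ w x ≤ 0) {α : ℝ} (hα : 0 < α)
    (hαn : (finrank ℝ E : ℝ) < 2 * α + 2) {m : ℝ} (hm : ∀ y : E, ‖y‖ = 1 → m ≤ w y)
    {x : E} (hx : 1 ≤ ‖x‖) :
    m * (‖x‖ ^ 2) ^ (-α) ≤ w x := by
  have hlim : Tendsto (fun R : ℝ => m * ((‖x‖ ^ 2) ^ (-α) - (R ^ 2) ^ (-α))) atTop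
      (𝓝 (m * ((‖x‖ ^ 2) ^ (-α) - 0))) :=
    (((tendsto_rpow_neg_atTop hα).comp (tendsto_pow_atTop two_ne_zero)).const_sub _).const_mul m
  rw [sub_zero] at hlim
  refine le_of_tendsto hlim ?_
  filter_upwards [eventually_gt_atTop ‖x‖] with R hR
  exact mul_rpow_sub_le_of_laplacian_nonpos hw hwpos hΔ hα hαn hm (hx.trans_lt hR) hx hR.le

lemma not_integrable_indicator_Ioi_one_rpow_neg_finrank [MeasurableSpace E] [BorelSpace E]
    (μ : Measure E) [μ.IsAddHaarMeasure] [Nontrivial E] :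
    ¬ Integrable (fun x : E => (Ioi 1).indicator (fun r => r ^ (-(finrank ℝ E : ℝ))) ‖x‖) μ := by
  intro hg
  have hpolar := ((integrable_fun_norm_addHaar μ).1 hg).mono_set (Ioi_subset_Ioi zero_le_one)
  have hrecip : IntegrableOn (fun y : ℝ => y ^ (-1 : ℝ)) (Ioi 1) := by
    refine hpolar.congr_fun (fun y (hy : 1 < y) => ?_) measurableSet_Ioi
    simp only [indicator_of_mem (show y ∈ Ioi 1 from hy), smul_eq_mul]
    rw [← Real.rpow_natCast, Nat.cast_sub finrank_pos, ← Real.rpow_add (one_pos.trans hy)]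
    ring_nf
  exact lt_irrefl _ ((integrableOn_Ioi_rpow_iff one_pos).1 hrecip)

theorem not_memLp_two_of_laplacian_nonpos [MeasurableSpace E] [BorelSpace E] (μ : Measure E)
    [μ.IsAddHaarMeasure] [Nontrivial E] (hdim : finrank ℝ E < 4) {w : E → ℝ}
    (hw : ContDiff ℝ 2 w) (hwpos : ∀ x, 0 < w x) (hΔ : ∀ x, Δ w x ≤ 0) :
    ¬ MemLp w 2 μ := by
  intro hL2
  set n : ℝ := (finrank ℝ E : ℝ)
  have hn : 0 < n := Nat.cast_pos.2 finrank_pos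
  have hn4 : n < 4 := by simp only [n]; exact_mod_cast hdim
  obtain ⟨z, hz⟩ := exists_norm_eq E zero_le_one
  obtain ⟨y₀, -, hmin⟩ := (isCompact_sphere (0 : E) 1).exists_isMinOn
    ⟨z, by simpa using hz⟩ hw.continuous.continuousOn
  have hm : 0 < w y₀ := hwpos y₀
  -- with `α = n / 4` the lower bound `|x|^(-n/2)` is just not square integrable at infinity
  have hlow (x : E) (hx : 1 < ‖x‖) : ‖x‖ ^ (-n) ≤ w x ^ 2 / w y₀ ^ 2 := by
    have h := mul_rpow_le_of_laplacian_nonpos hw hwpos hΔ (α := n / 4) (by positivity)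
      (by linarith) (fun y hy => hmin (by simpa using hy)) hx.le
    have hpow : ((‖x‖ ^ 2) ^ (-(n / 4))) ^ 2 = ‖x‖ ^ (-n) := by
      rw [← Real.rpow_natCast, ← Real.rpow_natCast, ← Real.rpow_mul (by positivity),
        ← Real.rpow_mul (norm_nonneg x)]
      congr 1
      push_cast
      ring
    rw [le_div_iff₀ (by positivity), ← hpow, ← mul_pow, mul_comm]
    exact pow_le_pow_left₀ (by positivity) h 2
  have hint : Integrable (fun x => w x ^ 2 / w y₀ ^ 2) μ :=
    ((memLp_two_iff_integrable_sq hw.continuous.aestronglyMeasurable).1 hL2).div_const _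
  refine not_integrable_indicator_Ioi_one_rpow_neg_finrank μ (hint.mono' ?_ ?_)
  · exact (((measurable_id.pow_const _).indicator measurableSet_Ioi).comp
      measurable_norm).aestronglyMeasurable
  · refine Eventually.of_forall fun x => ?_
    by_cases hx : 1 < ‖x‖
    · rw [indicator_of_mem (show ‖x‖ ∈ Ioi 1 from hx), Real.norm_eq_abs,
        abs_of_nonneg (Real.rpow_nonneg (norm_nonneg x) _)]
      exact hlow x hx
    · simp only [indicator_of_notMem (show ‖x‖ ∉ Ioi 1 from hx), norm_zero]
      positivity

lemma mul_sq_mul_add_le_cube_add_cube {p q a b : ℝ} (hp : 0 < p) (hpq : p ≤ q) (ha : 0 < a)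
    (hb : 0 < b) : p ^ 2 * q * (a ^ 2 * b + a * b ^ 2) ≤ p ^ 3 * a ^ 3 + q ^ 3 * b ^ 3 := by
  -- with `P = p a`, `Q = q b`: `P³ + Q³ - P²Q - PQ² = (P + Q)(P - Q)²`, and `p ≤ q`
  nlinarith [mul_nonneg (mul_nonneg (hp.trans_le hpq).le
      (add_pos (mul_pos hp ha) (mul_pos (hp.trans_le hpq) hb)).le)
      (sq_nonneg (p * a - q * b)),
    mul_nonneg (mul_nonneg (sub_nonneg.2 hpq) (mul_pos hp ha).le) (sq_nonneg (q * b)),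
    mul_pos hp ha, mul_pos (hp.trans_le hpq) hb]

lemma cubic_form_nonneg {μ₁ μ₂ β a b : ℝ} (hμ₁ : 0 < μ₁) (hμ₁₂ : μ₁ ≤ μ₂)
    (hβ : -((μ₁ ^ 2 * μ₂) ^ ((1 : ℝ) / 3)) ≤ β) (ha : 0 < a) (hb : 0 < b) :
    0 ≤ μ₁ * a ^ 3 + μ₂ * b ^ 3 + β * (a ^ 2 * b + a * b ^ 2) := by
  have hμ₂ : 0 < μ₂ := hμ₁.trans_le hμ₁₂
  have hcube {μ : ℝ} (hμ : 0 ≤ μ) : (μ ^ ((1 : ℝ) / 3)) ^ 3 = μ := by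
    rw [one_div]
    exact_mod_cast Real.rpow_inv_natCast_pow hμ three_ne_zero
  have hγ : (μ₁ ^ 2 * μ₂) ^ ((1 : ℝ) / 3) = (μ₁ ^ ((1 : ℝ) / 3)) ^ 2 * μ₂ ^ ((1 : ℝ) / 3) := by
    rw [Real.mul_rpow (by positivity) hμ₂.le, ← Real.rpow_natCast, ← Real.rpow_natCast,
      ← Real.rpow_mul hμ₁.le, ← Real.rpow_mul hμ₁.le]
    ring_nf
  have hmixed := mul_sq_mul_add_le_cube_add_cube (Real.rpow_pos_of_pos hμ₁ ((1 : ℝ) / 3))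
    (Real.rpow_le_rpow hμ₁.le hμ₁₂ (by norm_num)) ha hb
  rw [hcube hμ₁.le, hcube hμ₂.le, ← hγ] at hmixed
  nlinarith [mul_le_mul_of_nonneg_right hβ (by positivity : 0 ≤ a ^ 2 * b + a * b ^ 2)]

lemma neg_laplacian_sub_of_system {μ₁ μ₂ κ β : ℝ} {u v : E → ℝ} {x : E}
    (hu : ContDiffAt ℝ 2 u x) (hv : ContDiffAt ℝ 2 v x)
    (h₁ : -Δ u x + u x = μ₁ * u x ^ 3 + β * u x * v x ^ 2 - κ * v x)
    (h₂ : -Δ v x + v x = μ₂ * v x ^ 3 + β * u x ^ 2 * v x - κ * u x) :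
    -Δ (u - v) x = (κ - 1) * (u - v) x
      + (μ₁ * u x ^ 3 + μ₂ * (-v x) ^ 3 + β * (u x ^ 2 * (-v x) + u x * (-v x) ^ 2)) := by
  rw [hu.laplacian_sub hv, Pi.sub_apply]
  linear_combination h₁ - h₂

lemma false_of_pos_neg_solution [MeasurableSpace E] [BorelSpace E] (μ : Measure E)
    [μ.IsAddHaarMeasure] [Nontrivial E] (hdim : finrank ℝ E < 4) {μ₁ μ₂ κ β : ℝ}
    (hμ₁ : 0 < μ₁) (hμ₁₂ : μ₁ ≤ μ₂)
    (hcase : (1 < κ ∧ -((μ₁ ^ 2 * μ₂) ^ ((1 : ℝ) / 3)) ≤ β) ∨ (κ = 1 ∧ 0 < β))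
    {u v : E → ℝ} (hu : ContDiff ℝ 2 u) (hv : ContDiff ℝ 2 v) (hL2 : MemLp (u - v) 2 μ)
    (h₁ : ∀ x, -Δ u x + u x = μ₁ * u x ^ 3 + β * u x * v x ^ 2 - κ * v x)
    (h₂ : ∀ x, -Δ v x + v x = μ₂ * v x ^ 3 + β * u x ^ 2 * v x - κ * u x)
    (hsign : ∀ x, 0 < u x ∧ v x < 0) : False := by
  have hw : ∀ x, 0 < (u - v) x := fun x => sub_pos.2 ((hsign x).2.trans (hsign x).1)
  have hΔ x := neg_laplacian_sub_of_system hu.contDiffAt hv.contDiffAt (h₁ x) (h₂ x)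
  have ha x : 0 < u x := (hsign x).1
  have hb x : 0 < -v x := neg_pos.2 (hsign x).2
  have hβ : -((μ₁ ^ 2 * μ₂) ^ ((1 : ℝ) / 3)) ≤ β := by
    rcases hcase with ⟨-, hβ⟩ | ⟨-, hβ⟩
    · exact hβ
    · exact (neg_nonpos.2 (Real.rpow_nonneg
        (mul_nonneg (sq_nonneg μ₁) (hμ₁.trans_le hμ₁₂).le) _)).trans hβ.le
  have hcubic x := cubic_form_nonneg hμ₁ hμ₁₂ hβ (ha x) (hb x)
  rcases hcase with ⟨hκ, -⟩ | ⟨rfl, -⟩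
  · obtain ⟨x, hx⟩ := exists_neg_laplacian_lt_mul (w := u - v) (sub_pos.2 hκ) (hu.sub hv) hw
    linarith [hΔ x, hcubic x]
  · exact not_memLp_two_of_laplacian_nonpos μ hdim (w := u - v) (hu.sub hv) hw
      (fun x => by linarith [hΔ x, hcubic x]) hL2

end InnerProductSpace

lemma laplacian_eq_laplacian {N : ℕ} (u : EuclideanSpace ℝ (Fin N) → ℝ) : laplacian u = Δ u := by
  rw [InnerProductSpace.laplacian_eq_iteratedFDeriv_orthonormalBasis u
    (EuclideanSpace.basisFun (Fin N) ℝ)]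
  funext x
  simp [laplacian]

theorem stmt2 (N : ℕ) (hN : N = 2 ∨ N = 3) (μ₁ μ₂ κ β : ℝ)
    (hμ₁ : 0 < μ₁) (hμ₁₂ : μ₁ ≤ μ₂)
    (hcase : (1 < κ ∧ -((μ₁ ^ 2 * μ₂) ^ ((1 : ℝ) / 3)) ≤ β) ∨ (κ = 1 ∧ 0 < β)) :
    ¬ ∃ u v : EuclideanSpace ℝ (Fin N) → ℝ,
      ContDiff ℝ 2 u ∧ ContDiff ℝ 2 v ∧
      MemLp u 2 (volume : Measure (EuclideanSpace ℝ (Fin N))) ∧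
      MemLp v 2 (volume : Measure (EuclideanSpace ℝ (Fin N))) ∧
      MemLp (fun x => gradient u x) 2 (volume : Measure (EuclideanSpace ℝ (Fin N))) ∧
      MemLp (fun x => gradient v x) 2 (volume : Measure (EuclideanSpace ℝ (Fin N))) ∧
      (∀ x, -laplacian u x + u x = μ₁ * u x ^ 3 + β * u x * v x ^ 2 - κ * v x) ∧
      (∀ x, -laplacian v x + v x = μ₂ * v x ^ 3 + β * u x ^ 2 * v x - κ * u x) ∧
      ((∀ x, 0 < u x ∧ v x < 0) ∨ (∀ x, u x < 0 ∧ 0 < v x)) := by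
  rintro ⟨u, v, hu, hv, hu2, hv2, -, -, h₁, h₂, hsign⟩
  simp only [laplacian_eq_laplacian] at h₁ h₂
  have hdim : finrank ℝ (EuclideanSpace ℝ (Fin N)) < 4 := by
    rw [finrank_euclideanSpace_fin]; omega
  have : Nontrivial (EuclideanSpace ℝ (Fin N)) :=
    nontrivial_of_finrank_pos (R := ℝ) (by rw [finrank_euclideanSpace_fin]; omega)
  rcases hsign with hsign | hsign
  · exact false_of_pos_neg_solution volume hdim hμ₁ hμ₁₂ hcase hu hv (hu2.sub hv2) h₁ h₂ hsign
  · -- the system is odd, so `(-u, -v)` is a solution with `-u > 0 > -v`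
    refine false_of_pos_neg_solution volume hdim hμ₁ hμ₁₂ hcase (u := -u) (v := -v) hu.neg hv.neg
      (hu2.neg.sub hv2.neg) (fun x => ?_) (fun x => ?_)
      fun x => ⟨neg_pos.2 (hsign x).1, neg_lt_zero.2 (hsign x).2⟩
    · simp only [InnerProductSpace.laplacian_neg, Pi.neg_apply]
      linear_combination -h₁ x
    · simp only [InnerProductSpace.laplacian_neg, Pi.neg_apply]
      linear_combination -h₂ x
end

section
/- Let N ≥ 1, μ₂ ≥ μ₁ > 0, κ ∈ ℝ and −(μ₁²μ₂)^{1/3} ≤ β ≤ 0. If u, v : ℝ^N → ℝ are C² functions with u(x) ≥ 0 and v(x) ≥ 0 for all x, satisfying −Δu + u = μ₁u³ + βuv² − κv and −Δv + v = μ₂v³ + βu²v − κu pointwise, then U := u + v satisfies −ΔU(x) + (1+κ)U(x) ≥ μ₁^{1/3}·(μ₁^{1/3}u(x) − μ₂^{1/3}v(x))²·U(x) for all x ∈ ℝ^N. -/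
open MeasureTheory

/-! Adding the two equations gives `-ΔU + (1 + κ) U = μ₁u³ + μ₂v³ + βuv(u + v)`, so everything reduces
to a pointwise inequality for cubic forms. With `a = μ₁^{1/3} ≤ b = μ₂^{1/3}` and `β ≥ -a²b`,
the gap between the two sides is at least `(b - a) v ((au - bv)² + ab uv) ≥ 0`. -/

theorem laplacian_add {N : ℕ} {u v : EuclideanSpace ℝ (Fin N) → ℝ} {x : EuclideanSpace ℝ (Fin N)}
    (hu : ContDiffAt ℝ 2 u x) (hv : ContDiffAt ℝ 2 v x) :
    laplacian (fun y => u y + v y) x = laplacian u x + laplacian v x := by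
  simp only [laplacian, ← Finset.sum_add_distrib, fun_iteratedFDeriv_add_apply hu hv,
    add_apply]

theorem Real.rpow_one_div_three_pow_three {x : ℝ} (hx : 0 ≤ x) : (x ^ ((1 : ℝ) / 3)) ^ 3 = x := by
  simpa using Real.rpow_inv_natCast_pow hx three_ne_zero

theorem Real.rpow_one_div_three_sq_mul {x y : ℝ} (hx : 0 ≤ x) (hy : 0 ≤ y) :
    (x ^ 2 * y) ^ ((1 : ℝ) / 3) = (x ^ ((1 : ℝ) / 3)) ^ 2 * y ^ ((1 : ℝ) / 3) := by
  rw [Real.mul_rpow (by positivity) hy, ← Real.rpow_pow_comm hx]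

theorem cubic_form_ge {a b β u v : ℝ} (ha : 0 ≤ a) (hab : a ≤ b) (hβ : -(a ^ 2 * b) ≤ β)
    (hu : 0 ≤ u) (hv : 0 ≤ v) :
    a * (a * u - b * v) ^ 2 * (u + v) ≤ a ^ 3 * u ^ 3 + b ^ 3 * v ^ 3 + β * u * v * (u + v) := by
  have hgap : 0 ≤ (b - a) * v * ((a * u - b * v) ^ 2 + a * b * (u * v)) := by
    have : 0 ≤ b := ha.trans hab
    have : 0 ≤ u * v := mul_nonneg hu hv
    have : 0 ≤ b - a := sub_nonneg.2 hab
    positivity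
  have hβ_term : 0 ≤ (β + a ^ 2 * b) * (u * v * (u + v)) :=
    mul_nonneg (by linarith) (by positivity)
  nlinarith

theorem stmt16_general (N : ℕ) (μ₁ μ₂ κ β : ℝ)
    (hμ₁ : 0 < μ₁) (hμ₁₂ : μ₁ ≤ μ₂)
    (hβl : -((μ₁ ^ 2 * μ₂) ^ ((1 : ℝ) / 3)) ≤ β)
    (u v : EuclideanSpace ℝ (Fin N) → ℝ) (hu : ContDiff ℝ 2 u) (hv : ContDiff ℝ 2 v)
    (hupos : ∀ x, 0 ≤ u x) (hvpos : ∀ x, 0 ≤ v x)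
    (hequ : ∀ x, -laplacian u x + u x = μ₁ * u x ^ 3 + β * u x * v x ^ 2 - κ * v x)
    (heqv : ∀ x, -laplacian v x + v x = μ₂ * v x ^ 3 + β * u x ^ 2 * v x - κ * u x) :
    ∀ x, -laplacian (fun y => u y + v y) x + (1 + κ) * (u x + v x) ≥
      μ₁ ^ ((1 : ℝ) / 3) * (μ₁ ^ ((1 : ℝ) / 3) * u x - μ₂ ^ ((1 : ℝ) / 3) * v x) ^ 2 *
        (u x + v x) := by
  intro x
  have hμ₂ : 0 ≤ μ₂ := hμ₁.le.trans hμ₁₂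
  have key := cubic_form_ge (Real.rpow_nonneg hμ₁.le _)
    (Real.rpow_le_rpow hμ₁.le hμ₁₂ (by norm_num))
    (Real.rpow_one_div_three_sq_mul hμ₁.le hμ₂ ▸ hβl) (hupos x) (hvpos x)
  rw [Real.rpow_one_div_three_pow_three hμ₁.le, Real.rpow_one_div_three_pow_three hμ₂] at key
  rw [laplacian_add hu.contDiffAt hv.contDiffAt]
  linarith [hequ x, heqv x]

theorem stmt16 (N : ℕ) (hN : 1 ≤ N) (μ₁ μ₂ κ β : ℝ)
    (hμ₁ : 0 < μ₁) (hμ₁₂ : μ₁ ≤ μ₂)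
    (hβl : -((μ₁ ^ 2 * μ₂) ^ ((1 : ℝ) / 3)) ≤ β) (hβu : β ≤ 0)
    (u v : EuclideanSpace ℝ (Fin N) → ℝ) (hu : ContDiff ℝ 2 u) (hv : ContDiff ℝ 2 v)
    (hupos : ∀ x, 0 ≤ u x) (hvpos : ∀ x, 0 ≤ v x)
    (hequ : ∀ x, -laplacian u x + u x = μ₁ * u x ^ 3 + β * u x * v x ^ 2 - κ * v x)
    (heqv : ∀ x, -laplacian v x + v x = μ₂ * v x ^ 3 + β * u x ^ 2 * v x - κ * u x) :
    ∀ x, -laplacian (fun y => u y + v y) x + (1 + κ) * (u x + v x) ≥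
      μ₁ ^ ((1 : ℝ) / 3) * (μ₁ ^ ((1 : ℝ) / 3) * u x - μ₂ ^ ((1 : ℝ) / 3) * v x) ^ 2 *
        (u x + v x) :=
  stmt16_general N μ₁ μ₂ κ β hμ₁ hμ₁₂ hβl u v hu hv hupos hvpos hequ heqv
end
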